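/- arXiv:2305.01276 — 3 statements merged into one kernel-verified Lean document; each statement's English description precedes it below -/
import Mathlib

section
/- Let q ∈ [0,1], n, M ∈ ℕ, and let μ be the product probability measure on Ω = (Fin n → Fin M → Bool) in which all coordinates are independent and each equals true with probability 1 − q. For m ≤ M define N_m(ω) = card {i : Fin n | ∃ t : Fin M, (t : ℕ) < m ∧ ω i t = true}. Then for every 1 ≤ m ≤ M and every i ≤ j ≤ n with μ {ω | N_{m−1}(ω) = i} > 0, the conditional probability satisfies μ[{ω | N_m(ω) = j} | {ω | N_{m−1}(ω) = i}] = (n − i).choose (j − i) · (1 − q)^(j−i) · q^(n−j). (Equation (18): the transition probabilities of the entanglement-distribution Markov chain, which are independent of m.) -/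
open MeasureTheory ProbabilityTheory

/-- The Bernoulli measure on `Bool` assigning probability `1 - q` to `true`
and probability `q` to `false` (a probability measure when `q ∈ [0,1]`). -/
noncomputable def bernMeasure (q : ℝ) : Measure Bool :=
  ENNReal.ofReal (1 - q) • Measure.dirac true + ENNReal.ofReal q • Measure.dirac false

/-- `connCount n M m ω` is the number `N_m(ω)` of nodes connected within the first `m`
attempts, i.e. nodes `i` having at least one successful attempt `t < m`. -/
def connCount (n M m : ℕ) (ω : Fin n → Fin M → Bool) : ℕ :=
  (Finset.univ.filter fun i : Fin n => ∃ t : Fin M, (t : ℕ) < m ∧ ω i t = true).card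

namespace EacAux

open Finset
open scoped Classical ENNReal

lemma bern_singleton (q : ℝ) (v : Bool) :
    bernMeasure q {v} = if v = true then ENNReal.ofReal (1 - q) else ENNReal.ofReal q := by
  cases v <;> simp [bernMeasure, Measure.dirac_apply]

instance bern_finite (q : ℝ) : IsFiniteMeasure (bernMeasure q) := by
  constructor
  simp only [bernMeasure, Measure.add_apply, Measure.smul_apply, smul_eq_mul]
  refine ENNReal.add_lt_top.2 ⟨?_, ?_⟩ <;>
    exact lt_of_le_of_lt (mul_le_of_le_one_right zero_le (by simp [measure_mono]))
      ENNReal.ofReal_lt_top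

lemma bern_prob (q : ℝ) (hq0 : 0 ≤ q) (hq1 : q ≤ 1) : IsProbabilityMeasure (bernMeasure q) := by
  constructor
  simp only [bernMeasure, Measure.add_apply, Measure.smul_apply, smul_eq_mul, measure_univ,
    mul_one]
  rw [← ENNReal.ofReal_add (by linarith) hq0]
  norm_num

lemma measure_eq_sum {α : Type*} [Fintype α] [MeasurableSpace α] [MeasurableSingletonClass α]
    (μ : Measure α) (S : Set α) :
    μ S = ∑ x : α, if x ∈ S then μ {x} else 0 := by
  have h1 : S = ⋃ x ∈ (univ.filter (· ∈ S)), ({x} : Set α) := by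
    ext y; simp
  conv_lhs => rw [h1]
  rw [measure_biUnion_finset ?_ (fun x _ => measurableSet_singleton x)]
  · rw [Finset.sum_filter]
  · intro x _ y _ hxy
    simp [Function.onFun, Set.disjoint_singleton_left, hxy]

lemma pi_singleton (q : ℝ) (n M : ℕ) (ω : Fin n → Fin M → Bool) :
    (Measure.pi fun _ : Fin n => Measure.pi fun _ : Fin M => bernMeasure q) {ω}
      = ∏ i, ∏ t, (if ω i t = true then ENNReal.ofReal (1 - q) else ENNReal.ofReal q) := by
  rw [← Set.univ_pi_singleton, Measure.pi_pi]
  refine Finset.prod_congr rfl fun i _ => ?_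
  rw [← Set.univ_pi_singleton, Measure.pi_pi]
  exact Finset.prod_congr rfl fun t _ => bern_singleton q (ω i t)

lemma sum_bool_funs (p r : ℝ≥0∞) (n k : ℕ) (C : Finset (Fin n)) :
    (∑ b : Fin n → Bool,
      if ((univ.filter fun i => b i = true) \ C).card = k then
        (∏ i, if b i = true then p else r) else 0)
    = (p + r) ^ C.card * (((n - C.card).choose k : ℝ≥0∞) * p ^ k * r ^ (n - C.card - k)) := by
  -- Step 1 : reindex by the finset of `true` coordinates
  have step1 : (∑ b : Fin n → Bool,
      if ((univ.filter fun i => b i = true) \ C).card = k then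
        (∏ i, if b i = true then p else r) else 0)
      = ∑ u : Finset (Fin n), (if (u \ C).card = k then p ^ u.card * r ^ (n - u.card) else 0) := by
    refine Finset.sum_nbij' (fun b => univ.filter fun x => b x = true)
      (fun u => fun x => decide (x ∈ u)) (fun _ _ => mem_univ _) (fun _ _ => mem_univ _)
      ?_ ?_ ?_
    · intro b _; funext x; by_cases h : b x = true <;> simp [h]
    · intro u _; ext x; simp
    · intro b _
      congr 1
      rw [Finset.prod_ite, Finset.prod_const, Finset.prod_const]
      congr 1
      have : univ.filter (fun x => ¬ b x = true) = (univ.filter fun x => b x = true)ᶜ := by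
        ext x; simp
      rw [this, Finset.card_compl, Fintype.card_fin]
  rw [step1]
  -- Step 2 : split `u` into `u ∩ C` and `u \ C`
  have step2 : (∑ u : Finset (Fin n), (if (u \ C).card = k then p ^ u.card * r ^ (n - u.card) else 0))
      = ∑ x ∈ C.powerset ×ˢ Cᶜ.powerset,
          (if x.2.card = k then p ^ (x.1.card + x.2.card) * r ^ (n - (x.1.card + x.2.card)) else 0) := by
    refine Finset.sum_nbij' (fun u => (u ∩ C, u \ C)) (fun x => x.1 ∪ x.2) ?_ (fun _ _ => mem_univ _)
      ?_ ?_ ?_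
    · intro u _
      refine Finset.mem_product.2 ⟨Finset.mem_powerset.2 inter_subset_right, Finset.mem_powerset.2 ?_⟩
      intro x hx
      simp only [Finset.mem_sdiff] at hx
      simp [hx.2]
    · intro u _; exact sup_inf_sdiff u C
    · intro x hx
      obtain ⟨h1, h2⟩ := Finset.mem_product.1 hx
      rw [Finset.mem_powerset] at h1 h2
      have hd : Disjoint x.2 C := by
        refine Finset.disjoint_left.2 fun a ha hac => ?_
        have := h2 ha; simp only [Finset.mem_compl] at this; exact this hac
      have e1 : (x.1 ∪ x.2) ∩ C = x.1 := by
        rw [Finset.union_inter_distrib_right, Finset.inter_eq_left.2 h1,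
          Finset.disjoint_iff_inter_eq_empty.1 hd, Finset.union_empty]
      have e2 : (x.1 ∪ x.2) \ C = x.2 := by
        rw [Finset.union_sdiff_distrib, Finset.sdiff_eq_empty_iff_subset.2 h1,
          Finset.sdiff_eq_self_iff_disjoint.2 hd, Finset.empty_union]
      exact Prod.ext e1 e2
    · intro u _
      rw [← Finset.card_inter_add_card_sdiff u C]
  rw [step2, Finset.sum_product]
  -- Step 3 : inner sum over `d ⊆ Cᶜ` with `d.card = k`
  have step3 : ∀ a ∈ C.powerset,
      (∑ d ∈ Cᶜ.powerset,
        if d.card = k then p ^ (a.card + d.card) * r ^ (n - (a.card + d.card)) else 0)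
      = ((n - C.card).choose k : ℝ≥0∞) *
          (p ^ a.card * r ^ (C.card - a.card)) * (p ^ k * r ^ (n - C.card - k)) := by
    intro a ha
    have haC : a.card ≤ C.card := Finset.card_le_card (Finset.mem_powerset.1 ha)
    rw [← Finset.sum_filter, ← Finset.powersetCard_eq_filter]
    by_cases hk : k + C.card ≤ n
    · have : ∀ d ∈ Finset.powersetCard k Cᶜ,
          p ^ (a.card + d.card) * r ^ (n - (a.card + d.card))
          = (p ^ a.card * r ^ (C.card - a.card)) * (p ^ k * r ^ (n - C.card - k)) := by
        intro d hd
        obtain ⟨-, hdk⟩ := Finset.mem_powersetCard.1 hd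
        subst hdk
        rw [pow_add]
        have hexp : n - (a.card + d.card) = (C.card - a.card) + (n - C.card - d.card) := by omega
        rw [hexp, pow_add]
        ring
      rw [Finset.sum_congr rfl this, Finset.sum_const, Finset.card_powersetCard,
        Finset.card_compl, Fintype.card_fin, nsmul_eq_mul]
      ring
    · have hCn : C.card ≤ n := by simpa using Finset.card_le_univ C
      have hcc : Cᶜ.card < k := by
        rw [Finset.card_compl, Fintype.card_fin]; omega
      rw [Finset.powersetCard_eq_empty.2 hcc, Finset.sum_empty]
      have : (n - C.card).choose k = 0 := by
        apply Nat.choose_eq_zero_of_lt; omega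
      rw [this]
      simp
  rw [Finset.sum_congr rfl step3]
  -- Step 4 : outer sum over `a ⊆ C`
  have step4 : (∑ a ∈ C.powerset, p ^ a.card * r ^ (C.card - a.card)) = (p + r) ^ C.card := by
    rw [← Finset.prod_const, Finset.prod_add]
    refine Finset.sum_congr rfl fun a ha => ?_
    rw [Finset.prod_const, Finset.prod_const,
      Finset.card_sdiff_of_subset (Finset.mem_powerset.1 ha)]
  calc (∑ a ∈ C.powerset, ((n - C.card).choose k : ℝ≥0∞) *
          (p ^ a.card * r ^ (C.card - a.card)) * (p ^ k * r ^ (n - C.card - k)))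
      = (∑ a ∈ C.powerset, p ^ a.card * r ^ (C.card - a.card)) *
          (((n - C.card).choose k : ℝ≥0∞) * (p ^ k * r ^ (n - C.card - k))) := by
        rw [Finset.sum_mul]
        refine Finset.sum_congr rfl fun a _ => by ring
    _ = (p + r) ^ C.card * (((n - C.card).choose k : ℝ≥0∞) * p ^ k * r ^ (n - C.card - k)) := by
        rw [step4]; ring

variable {n M : ℕ} {t₀ : Fin M}

/-- Reassemble a configuration from the column at `t₀` and the rest. -/
def glue (t₀ : Fin M) (b : Fin n → Bool) (g : Fin n → {t : Fin M // t ≠ t₀} → Bool) :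
    Fin n → Fin M → Bool :=
  fun i t => if h : t = t₀ then b i else g i ⟨t, h⟩

def splitEquiv (n M : ℕ) (t₀ : Fin M) :
    ((Fin n → Bool) × (Fin n → {t : Fin M // t ≠ t₀} → Bool)) ≃ (Fin n → Fin M → Bool) where
  toFun x := glue t₀ x.1 x.2
  invFun ω := (fun i => ω i t₀, fun i t => ω i t.1)
  left_inv x := by
    refine Prod.ext ?_ ?_
    · funext i; simp [glue]
    · funext i t; simp [glue, t.2]
  right_inv ω := by
    funext i t
    by_cases h : t = t₀ <;> simp [glue, h]

/-- The set of nodes connected within the first `m - 1` attempts, as read off the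
non-`t₀` columns. -/
def connSet (m : ℕ) (g : Fin n → {t : Fin M // t ≠ t₀} → Bool) : Finset (Fin n) :=
  Finset.univ.filter fun i =>
    ∃ t : {t : Fin M // t ≠ t₀}, ((t : Fin M) : ℕ) < m - 1 ∧ g i t = true

lemma conn_prev (m : ℕ) (ht₀ : (t₀ : ℕ) = m - 1)
    (b : Fin n → Bool) (g : Fin n → {t : Fin M // t ≠ t₀} → Bool) :
    connCount n M (m - 1) (glue t₀ b g) = (connSet m g).card := by
  unfold connCount connSet
  congr 1
  refine Finset.filter_congr fun i _ => ?_
  constructor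
  · rintro ⟨t, ht, hval⟩
    have hne : t ≠ t₀ := by
      intro h; subst h; omega
    refine ⟨⟨t, hne⟩, ht, ?_⟩
    simpa [glue, hne] using hval
  · rintro ⟨t, ht, hval⟩
    exact ⟨t.1, ht, by simpa [glue, t.2] using hval⟩

lemma conn_cur (m : ℕ) (hm1 : 1 ≤ m) (ht₀ : (t₀ : ℕ) = m - 1)
    (b : Fin n → Bool) (g : Fin n → {t : Fin M // t ≠ t₀} → Bool) :
    connCount n M m (glue t₀ b g)
      = (connSet m g).card
        + ((Finset.univ.filter fun i => b i = true) \ connSet m g).card := by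
  unfold connCount
  have hfil : (Finset.univ.filter fun i : Fin n =>
        ∃ t : Fin M, (t : ℕ) < m ∧ glue t₀ b g i t = true)
      = connSet m g ∪ (Finset.univ.filter fun i => b i = true) := by
    ext i
    simp only [connSet, Finset.mem_union, Finset.mem_filter, Finset.mem_univ, true_and]
    constructor
    · rintro ⟨t, ht, hval⟩
      by_cases h : t = t₀
      · subst h; right; simpa [glue] using hval
      · left
        refine ⟨⟨t, h⟩, ?_, by simpa [glue, h] using hval⟩
        have : (t : ℕ) ≠ m - 1 := fun hc => h (Fin.ext (by omega))
        show (t : ℕ) < m - 1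
        omega
    · rintro (⟨t, ht, hval⟩ | hb)
      · refine ⟨t.1, ?_, by simpa [glue, t.2] using hval⟩
        have := ht; omega
      · exact ⟨t₀, by omega, by simpa [glue] using hb⟩
  rw [hfil, Finset.union_comm, ← Finset.card_sdiff_add_card]
  omega

lemma weight_glue (f : Bool → ℝ≥0∞) (b : Fin n → Bool)
    (g : Fin n → {t : Fin M // t ≠ t₀} → Bool) :
    (∏ i, ∏ t : Fin M, f (glue t₀ b g i t))
      = (∏ i, f (b i)) * ∏ i, ∏ t : {t : Fin M // t ≠ t₀}, f (g i t) := by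
  rw [← Finset.prod_mul_distrib]
  refine Finset.prod_congr rfl fun i _ => ?_
  rw [← Finset.mul_prod_erase univ _ (mem_univ t₀)]
  congr 1
  · simp [glue]
  · rw [Finset.prod_subtype (p := fun x => x ≠ t₀) (univ.erase t₀) (fun x => by simp)
      (fun t => f (glue t₀ b g i t))]
    refine Finset.prod_congr rfl fun t _ => ?_
    simp [glue, t.2]

lemma measure_expand (q : ℝ) (t₀ : Fin M) (S : Set (Fin n → Fin M → Bool)) :
    (Measure.pi fun _ : Fin n => Measure.pi fun _ : Fin M => bernMeasure q) S
      = ∑ b : Fin n → Bool, ∑ g : Fin n → {t : Fin M // t ≠ t₀} → Bool,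
          (if glue t₀ b g ∈ S then
            (∏ i, if b i = true then ENNReal.ofReal (1 - q) else ENNReal.ofReal q)
              * ∏ i, ∏ t : {t : Fin M // t ≠ t₀},
                  (if g i t = true then ENNReal.ofReal (1 - q) else ENNReal.ofReal q)
          else 0) := by
  rw [measure_eq_sum]
  rw [← Equiv.sum_comp (splitEquiv n M t₀)
    (fun ω => if ω ∈ S then
      (Measure.pi fun _ : Fin n => Measure.pi fun _ : Fin M => bernMeasure q) {ω} else 0)]
  rw [Fintype.sum_prod_type]
  refine Finset.sum_congr rfl fun b _ => Finset.sum_congr rfl fun g _ => ?_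
  have hE : splitEquiv n M t₀ (b, g) = glue t₀ b g := rfl
  rw [hE, pi_singleton, weight_glue (fun v => if v = true then ENNReal.ofReal (1 - q)
    else ENNReal.ofReal q) b g]

end EacAux

open EacAux Finset in
open scoped Classical ENNReal in
/-- **Equation (18).** The transition probabilities of the entanglement-distribution
Markov chain: given `i` connected nodes after `m - 1` attempts, the probability of having
`j` connected nodes after `m` attempts is `C(n-i, j-i) (1-q)^(j-i) q^(n-j)`,
independently of `m`. -/
theorem eac_markov_transition_prob (q : ℝ) (hq0 : 0 ≤ q) (hq1 : q ≤ 1)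
    (n M m : ℕ) (hm1 : 1 ≤ m) (hmM : m ≤ M)
    (μ : Measure (Fin n → Fin M → Bool))
    (hμ : μ = Measure.pi fun _ : Fin n => Measure.pi fun _ : Fin M => bernMeasure q)
    (i j : ℕ) (hij : i ≤ j) (hjn : j ≤ n)
    (hpos : 0 < μ {ω | connCount n M (m - 1) ω = i}) :
    μ[{ω | connCount n M m ω = j} | {ω | connCount n M (m - 1) ω = i}] =
      ENNReal.ofReal (((n - i).choose (j - i) : ℝ) * (1 - q) ^ (j - i) * q ^ (n - j)) := by
  subst hμ
  have hpr : ENNReal.ofReal (1 - q) + ENNReal.ofReal q = 1 := by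
    rw [← ENNReal.ofReal_add (by linarith) hq0]; norm_num
  have hm0 : m - 1 < M := by omega
  set t₀ : Fin M := ⟨m - 1, hm0⟩ with ht₀def
  have ht₀ : (t₀ : ℕ) = m - 1 := rfl
  haveI := bern_prob q hq0 hq1
  -- the sum over one column of Bernoulli weights is 1
  have hsum1 : (∑ b : Fin n → Bool, ∏ k : Fin n,
      (if b k = true then ENNReal.ofReal (1 - q) else ENNReal.ofReal q)) = 1 := by
    have h1 : (∑ v : Bool, (if v = true then ENNReal.ofReal (1 - q) else ENNReal.ofReal q)) = 1 := by
      rw [Fintype.sum_bool]; simpa using hpr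
    have h2 := Finset.prod_univ_sum (fun _ : Fin n => (Finset.univ : Finset Bool))
      (fun _ v => if v = true then ENNReal.ofReal (1 - q) else ENNReal.ofReal q)
    rw [Fintype.piFinset_univ] at h2
    rw [← h2, Finset.prod_congr rfl fun _ _ => h1, Finset.prod_const, one_pow]
  -- measure of the conditioning event
  have hB' : (Measure.pi fun _ : Fin n => Measure.pi fun _ : Fin M => bernMeasure q)
        {ω | connCount n M (m - 1) ω = i}
      = ∑ g : Fin n → {t : Fin M // t ≠ t₀} → Bool,
          (if (connSet m g).card = i then
            (∏ a, ∏ t : {t : Fin M // t ≠ t₀},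
              (if g a t = true then ENNReal.ofReal (1 - q) else ENNReal.ofReal q)) else 0) := by
    rw [measure_expand q t₀, Finset.sum_comm]
    refine Finset.sum_congr rfl fun g _ => ?_
    have hmem : ∀ b, (glue t₀ b g ∈ {ω | connCount n M (m - 1) ω = i})
        = ((connSet m g).card = i) := by
      intro b
      simp only [Set.mem_setOf_eq, conn_prev m ht₀ b g]
    simp only [hmem]
    by_cases h : (connSet m g).card = i
    · simp only [if_pos h]
      rw [← Finset.sum_mul, hsum1, one_mul]
    · simp [h]
  -- measure of the intersection
  have hBA : (Measure.pi fun _ : Fin n => Measure.pi fun _ : Fin M => bernMeasure q)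
        ({ω | connCount n M (m - 1) ω = i} ∩ {ω | connCount n M m ω = j})
      = (((n - i).choose (j - i) : ℝ≥0∞) * ENNReal.ofReal (1 - q) ^ (j - i)
            * ENNReal.ofReal q ^ (n - j)) *
        ∑ g : Fin n → {t : Fin M // t ≠ t₀} → Bool,
          (if (connSet m g).card = i then
            (∏ a, ∏ t : {t : Fin M // t ≠ t₀},
              (if g a t = true then ENNReal.ofReal (1 - q) else ENNReal.ofReal q)) else 0) := by
    rw [measure_expand q t₀, Finset.sum_comm, Finset.mul_sum]
    refine Finset.sum_congr rfl fun g _ => ?_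
    have hmem : ∀ b, (glue t₀ b g ∈
          ({ω | connCount n M (m - 1) ω = i} ∩ {ω | connCount n M m ω = j}))
        = ((connSet m g).card = i ∧
            ((Finset.univ.filter fun k => b k = true) \ connSet m g).card = j - i) := by
      intro b
      simp only [Set.mem_inter_iff, Set.mem_setOf_eq, conn_prev m ht₀ b g,
        conn_cur m hm1 ht₀ b g, eq_iff_iff]
      constructor
      · rintro ⟨h1, h2⟩; exact ⟨h1, by omega⟩
      · rintro ⟨h1, h2⟩; exact ⟨h1, by omega⟩
    simp only [hmem]
    by_cases h : (connSet m g).card = i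
    · have hcond : ∀ b : Fin n → Bool, ((connSet m g).card = i ∧
          ((Finset.univ.filter fun k => b k = true) \ connSet m g).card = j - i)
          = (((Finset.univ.filter fun k => b k = true) \ connSet m g).card = j - i) := by
        intro b; simp [h]
      simp only [hcond, if_pos h]
      have hinner : (∑ b : Fin n → Bool,
          if ((Finset.univ.filter fun k => b k = true) \ connSet m g).card = j - i
          then ∏ k : Fin n, (if b k = true then ENNReal.ofReal (1 - q) else ENNReal.ofReal q)
          else 0)
          = ((n - i).choose (j - i) : ℝ≥0∞) * ENNReal.ofReal (1 - q) ^ (j - i)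
              * ENNReal.ofReal q ^ (n - j) := by
        rw [sum_bool_funs (ENNReal.ofReal (1 - q)) (ENNReal.ofReal q) n (j - i) (connSet m g),
          h, hpr, one_pow, one_mul]
        have hnij : n - i - (j - i) = n - j := by omega
        rw [hnij]
      calc (∑ b : Fin n → Bool,
            if ((Finset.univ.filter fun k => b k = true) \ connSet m g).card = j - i
            then (∏ k : Fin n, (if b k = true then ENNReal.ofReal (1 - q) else ENNReal.ofReal q))
              * ∏ a, ∏ t : {t : Fin M // t ≠ t₀},
                  (if g a t = true then ENNReal.ofReal (1 - q) else ENNReal.ofReal q)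
            else 0)
          = (∑ b : Fin n → Bool,
            if ((Finset.univ.filter fun k => b k = true) \ connSet m g).card = j - i
            then ∏ k : Fin n, (if b k = true then ENNReal.ofReal (1 - q) else ENNReal.ofReal q)
            else 0) * ∏ a, ∏ t : {t : Fin M // t ≠ t₀},
                  (if g a t = true then ENNReal.ofReal (1 - q) else ENNReal.ofReal q) := by
            rw [Finset.sum_mul]
            exact Finset.sum_congr rfl fun b _ => by rw [ite_mul, zero_mul]
        _ = _ := by rw [hinner]
    · simp [h]
  have hBmeas : MeasurableSet {ω : Fin n → Fin M → Bool | connCount n M (m - 1) ω = i} :=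
    (Set.to_countable _).measurableSet
  rw [ProbabilityTheory.cond_apply hBmeas, hBA, ← hB', mul_comm
    (((n - i).choose (j - i) : ℝ≥0∞) * ENNReal.ofReal (1 - q) ^ (j - i)
      * ENNReal.ofReal q ^ (n - j)), ← mul_assoc,
    ENNReal.inv_mul_cancel hpos.ne' (measure_ne_top _ _), one_mul,
    ENNReal.ofReal_mul (mul_nonneg (Nat.cast_nonneg _) (pow_nonneg (by linarith) _)),
    ENNReal.ofReal_mul (Nat.cast_nonneg _), ENNReal.ofReal_natCast,
    ENNReal.ofReal_pow (by linarith), ENNReal.ofReal_pow hq0]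
end

section
/- Let q ∈ [0,1], n, M ∈ ℕ, and let μ be the product probability measure on Ω = (Fin n → Fin M → Bool) in which all coordinates are independent and each equals true with probability 1 − q. For m ≤ M define N_m(ω) = card {i : Fin n | ∃ t : Fin M, (t : ℕ) < m ∧ ω i t = true}. Then for every 2 ≤ m ≤ M and all natural numbers i_1 ≤ i_2 ≤ … ≤ i_{m−1} ≤ j ≤ n such that μ {ω | ∀ r, 1 ≤ r ≤ m−1 → N_r(ω) = i_r} > 0, the conditional probabilities satisfy μ[{ω | N_m(ω) = j} | {ω | ∀ r, 1 ≤ r ≤ m−1 → N_r(ω) = i_r}] = μ[{ω | N_m(ω) = j} | {ω | N_{m−1}(ω) = i_{m−1}}]. (Proposition 1: the process N_1, N_2, …, N_M is a discrete-time Markov chain.) -/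
open MeasureTheory ProbabilityTheory Finset ENNReal

noncomputable def wB (q : ℝ) (b : Bool) : ℝ≥0∞ :=
  if b then ENNReal.ofReal (1 - q) else ENNReal.ofReal q

lemma bern_singleton (q : ℝ) (b : Bool) : bernMeasure q {b} = wB q b := by
  cases b <;> simp [bernMeasure, wB, Measure.dirac_apply]

lemma wB_sum (q : ℝ) (hq0 : 0 ≤ q) (hq1 : q ≤ 1) : wB q true + wB q false = 1 := by
  show ENNReal.ofReal (1 - q) + ENNReal.ofReal q = 1
  rw [← ENNReal.ofReal_add (by linarith) hq0]
  norm_num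

lemma bern_prob (q : ℝ) (hq0 : 0 ≤ q) (hq1 : q ≤ 1) : IsProbabilityMeasure (bernMeasure q) := by
  constructor
  have : (Set.univ : Set Bool) = {true} ∪ {false} := by
    ext b; cases b <;> simp
  rw [this, measure_union (by simp) (by simp), bern_singleton, bern_singleton, wB_sum q hq0 hq1]

instance bern_finite (q : ℝ) : IsFiniteMeasure (bernMeasure q) := by
  constructor
  simp only [bernMeasure, Measure.add_apply, Measure.smul_apply, smul_eq_mul]
  finiteness

lemma singleton_pi {n M : ℕ} (ω : Fin n → Fin M → Bool) :
    ({ω} : Set (Fin n → Fin M → Bool)) = Set.univ.pi (fun i => Set.univ.pi (fun t => {ω i t})) := by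
  ext ω'; simp [funext_iff, Set.mem_pi]

lemma measure_singleton_eq {q : ℝ} {n M : ℕ}
    (ω : Fin n → Fin M → Bool) :
    (Measure.pi fun _ : Fin n => Measure.pi fun _ : Fin M => bernMeasure q) {ω}
      = ∏ i, ∏ t, wB q (ω i t) := by
  rw [singleton_pi, Measure.pi_pi]
  congr 1; funext i
  rw [Measure.pi_pi]
  congr 1; funext t
  exact bern_singleton q (ω i t)

lemma measure_eq_sum {q : ℝ} {n M : ℕ} (T : Set (Fin n → Fin M → Bool)) [DecidablePred (· ∈ T)] :
    (Measure.pi fun _ : Fin n => Measure.pi fun _ : Fin M => bernMeasure q) T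
      = ∑ ω ∈ univ.filter (· ∈ T), ∏ i, ∏ t, wB q (ω i t) := by
  have hT : T = ⋃ ω ∈ (univ.filter (· ∈ T) : Finset _), ({ω} : Set _) := by
    ext ω; simp
  have hd : ((univ.filter (· ∈ T) : Finset _) : Set (Fin n → Fin M → Bool)).PairwiseDisjoint (fun ω => ({ω} : Set (Fin n → Fin M → Bool))) := by
    intro x _ y _ hxy
    simp [Set.disjoint_singleton, hxy]
  have h2 := measure_biUnion_finset (μ := (Measure.pi fun _ : Fin n => Measure.pi fun _ : Fin M => bernMeasure q)) hd (fun _ _ => MeasurableSet.of_discrete)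
  rw [← hT] at h2
  rw [h2]
  exact Finset.sum_congr rfl fun ω _ => measure_singleton_eq ω


/-- Splitting a sum over Boolean configurations along a predicate on indices. -/
lemma sum_bool_split {ι : Type*} [Fintype ι] [DecidableEq ι] (p : ι → Prop) [DecidablePred p]
    (F : (ι → Bool) → ℝ≥0∞) :
    ∑ x : ι → Bool, F x
      = ∑ y : {a // p a} → Bool, ∑ z : {a // ¬ p a} → Bool,
          F (fun a => if h : p a then y ⟨a, h⟩ else z ⟨a, h⟩) := by
  calc ∑ x : ι → Bool, F x
      = ∑ yz : ({a // p a} → Bool) × ({a // ¬ p a} → Bool),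
          F ((Equiv.piEquivPiSubtypeProd p (fun _ => Bool)).symm yz) :=
        (Fintype.sum_equiv (Equiv.piEquivPiSubtypeProd p (fun _ => Bool)).symm _ F
          (fun _ => rfl)).symm
    _ = ∑ y : {a // p a} → Bool, ∑ z : {a // ¬ p a} → Bool,
          F ((Equiv.piEquivPiSubtypeProd p (fun _ => Bool)).symm (y, z)) :=
        Fintype.sum_prod_type _
    _ = _ := by
        refine Finset.sum_congr rfl fun y _ => Finset.sum_congr rfl fun z _ => ?_
        congr 1

lemma prod_bool_split {ι : Type*} [Fintype ι] [DecidableEq ι] (p : ι → Prop) [DecidablePred p]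
    (g : ι → Bool → ℝ≥0∞) (y : {a // p a} → Bool) (z : {a // ¬ p a} → Bool) :
    ∏ a : ι, g a (if h : p a then y ⟨a, h⟩ else z ⟨a, h⟩)
      = (∏ a : {a // p a}, g a.1 (y a)) * ∏ a : {a // ¬ p a}, g a.1 (z a) := by
  rw [← Fintype.prod_subtype_mul_prod_subtype p (fun a => g a (if h : p a then y ⟨a, h⟩ else z ⟨a, h⟩))]
  congr 1
  · exact Fintype.prod_congr _ _ (fun a => by rw [dif_pos a.2])
  · exact Fintype.prod_congr _ _ (fun a => by rw [dif_neg a.2])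

lemma sum_prod_bool_one {ι : Type*} [Fintype ι] [DecidableEq ι] (g : ι → Bool → ℝ≥0∞)
    (hg : ∀ a, g a true + g a false = 1) :
    ∑ z : ι → Bool, ∏ a : ι, g a (z a) = 1 := by
  rw [← Fintype.piFinset_univ, ← Finset.prod_univ_sum (fun _ => (univ : Finset Bool)) g]
  rw [Finset.prod_eq_one]
  intro a _
  rw [Fintype.sum_bool]
  exact hg a

/-- Marginalizing out the coordinates not satisfying `p`, when each such
coordinate has total mass one and `C` only depends on the `p`-coordinates. -/
lemma sum_bool_marginal {ι : Type*} [Fintype ι] [DecidableEq ι] (p : ι → Prop) [DecidablePred p]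
    (g : ι → Bool → ℝ≥0∞) (hg : ∀ a, ¬ p a → g a true + g a false = 1)
    (C : (ι → Bool) → ℝ≥0∞)
    (hC : ∀ x x' : ι → Bool, (∀ a, p a → x a = x' a) → C x = C x') :
    ∑ x : ι → Bool, C x * ∏ a : ι, g a (x a)
      = ∑ y : {a // p a} → Bool,
          C (fun a => if h : p a then y ⟨a, h⟩ else false) * ∏ a : {a // p a}, g a.1 (y a) := by
  rw [sum_bool_split p]
  refine Finset.sum_congr rfl fun y _ => ?_
  have : ∀ z : {a // ¬ p a} → Bool,
      C (fun a => if h : p a then y ⟨a, h⟩ else z ⟨a, h⟩)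
        = C (fun a => if h : p a then y ⟨a, h⟩ else false) := by
    intro z
    apply hC
    intro a ha
    simp [dif_pos ha]
  calc ∑ z : {a // ¬ p a} → Bool,
        C (fun a => if h : p a then y ⟨a, h⟩ else z ⟨a, h⟩)
          * ∏ a : ι, g a (if h : p a then y ⟨a, h⟩ else z ⟨a, h⟩)
      = ∑ z : {a // ¬ p a} → Bool,
        C (fun a => if h : p a then y ⟨a, h⟩ else false)
          * ((∏ a : {a // p a}, g a.1 (y a)) * ∏ a : {a // ¬ p a}, g a.1 (z a)) := by
        exact Finset.sum_congr rfl fun z _ => by rw [this z, prod_bool_split]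
    _ = C (fun a => if h : p a then y ⟨a, h⟩ else false) * ∏ a : {a // p a}, g a.1 (y a) := by
        rw [← Finset.mul_sum, ← Finset.mul_sum]
        rw [sum_prod_bool_one (fun a : {a // ¬ p a} => g a.1) (fun a => hg a.1 a.2), mul_one]


/-- A permutation carrying one finset onto another of the same cardinality. -/
lemma exists_perm_of_card_eq {α : Type*} [Fintype α] [DecidableEq α]
    {C C' : Finset α} (h : C.card = C'.card) :
    ∃ π : Equiv.Perm α, ∀ x, x ∈ C ↔ π x ∈ C' := by
  have h1 : Fintype.card {x // x ∈ C} = Fintype.card {x // x ∈ C'} := by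
    simp [Fintype.card_coe, h]
  have h2 : Fintype.card {x // ¬ x ∈ C} = Fintype.card {x // ¬ x ∈ C'} := by
    rw [Fintype.card_subtype_compl, Fintype.card_subtype_compl, Fintype.card_coe,
      Fintype.card_coe, h]
  let e1 : {x // x ∈ C} ≃ {x // x ∈ C'} := Fintype.equivOfCardEq h1
  let e2 : {x // ¬ x ∈ C} ≃ {x // ¬ x ∈ C'} := Fintype.equivOfCardEq h2
  refine ⟨(Equiv.sumCompl (· ∈ C)).symm.trans ((Equiv.sumCongr e1 e2).trans
    (Equiv.sumCompl (· ∈ C'))), fun x => ?_⟩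
  by_cases hx : x ∈ C
  · simp only [Equiv.trans_apply, Equiv.sumCompl_symm_apply_of_pos hx, Equiv.sumCongr_apply,
      Sum.map_inl, Equiv.sumCompl_apply_inl]
    exact iff_of_true hx (e1 ⟨x, hx⟩).2
  · simp only [Equiv.trans_apply, Equiv.sumCompl_symm_apply_of_neg hx, Equiv.sumCongr_apply,
      Sum.map_inr, Equiv.sumCompl_apply_inr]
    exact iff_of_false hx (e2 ⟨x, hx⟩).2

noncomputable def Hfun (q : ℝ) (n j : ℕ) (C : Finset (Fin n)) : ℝ≥0∞ :=
  ∑ τ : Fin n → Bool,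
    if (C ∪ univ.filter fun i => τ i = true).card = j then ∏ i, wB q (τ i) else 0

lemma Hfun_card_eq (q : ℝ) (n j : ℕ) {C C' : Finset (Fin n)} (h : C.card = C'.card) :
    Hfun q n j C = Hfun q n j C' := by
  obtain ⟨π, hπ⟩ := exists_perm_of_card_eq h
  unfold Hfun
  refine Fintype.sum_bijective (fun τ : Fin n → Bool => τ ∘ π.symm)
    ((Equiv.arrowCongr π (Equiv.refl Bool)).bijective) _ _ fun τ => ?_
  have himg : Finset.image π (C ∪ univ.filter fun i => τ i = true)
      = C' ∪ univ.filter fun i => τ (π.symm i) = true := by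
    ext x
    simp only [Finset.mem_image, Finset.mem_union, Finset.mem_filter, Finset.mem_univ,
      true_and]
    constructor
    · rintro ⟨i, hi, rfl⟩
      rcases hi with hc | ht
      · exact Or.inl ((hπ i).1 hc)
      · exact Or.inr (by simpa using ht)
    · intro hx
      refine ⟨π.symm x, ?_, by simp⟩
      rcases hx with hc | ht
      · exact Or.inl ((hπ (π.symm x)).2 (by simpa using hc))
      · exact Or.inr ht
  have hcard : (C ∪ univ.filter fun i => τ i = true).card
      = (C' ∪ univ.filter fun i => τ (π.symm i) = true).card := by
    rw [← himg, Finset.card_image_of_injective _ π.injective]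
  have hprod : ∏ i, wB q (τ i) = ∏ i, wB q (τ (π.symm i)) :=
    (Equiv.prod_comp π.symm (fun i => wB q (τ i))).symm
  simp only [Function.comp_apply]
  rw [hcard, hprod]



open scoped Classical

/-- The index type of "past" coordinates (attempts strictly before slot `a`). -/
abbrev PastIdx (n M a : ℕ) := {e : Fin n × Fin M // (e.2 : ℕ) < a}

/-- Reconstruction of a configuration from past data `y` and slot-`a` data `τ`,
with all later slots set to `false`. -/
def ωof (n M a : ℕ) (y : PastIdx n M a → Bool) (τ : Fin n → Bool) :
    Fin n → Fin M → Bool := fun i t =>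
  if h : (t : ℕ) < a then y ⟨(i, t), h⟩ else if (t : ℕ) = a then τ i else false

lemma connCount_congr (n M r : ℕ) (ω ω' : Fin n → Fin M → Bool)
    (h : ∀ (i : Fin n) (t : Fin M), (t : ℕ) < r → ω i t = ω' i t) :
    connCount n M r ω = connCount n M r ω' := by
  unfold connCount
  congr 1
  apply Finset.filter_congr
  intro i _
  constructor
  · rintro ⟨t, ht, he⟩; exact ⟨t, ht, by rw [← h i t ht]; exact he⟩
  · rintro ⟨t, ht, he⟩; exact ⟨t, ht, by rw [h i t ht]; exact he⟩

lemma conn_ωof (n M a : ℕ) (haM : a < M) (y : PastIdx n M a → Bool) (τ : Fin n → Bool) :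
    connCount n M (a + 1) (ωof n M a y τ)
      = ((univ.filter fun i =>
            ∃ t : Fin M, (t : ℕ) < a ∧ ωof n M a y (fun _ => false) i t = true)
          ∪ univ.filter fun i => τ i = true).card := by
  unfold connCount
  rw [← Finset.filter_or]
  congr 1
  apply Finset.filter_congr
  intro i _
  constructor
  · rintro ⟨t, ht, he⟩
    by_cases h' : (t : ℕ) < a
    · refine Or.inl ⟨t, h', ?_⟩
      rw [ωof] at he ⊢
      rw [dif_pos h'] at he ⊢
      exact he
    · have hta : (t : ℕ) = a := by omega
      rw [ωof, dif_neg h', if_pos hta] at he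
      exact Or.inr he
  · rintro (⟨t, ht, he⟩ | hτ)
    · refine ⟨t, by omega, ?_⟩
      rw [ωof] at he ⊢
      rw [dif_pos ht] at he ⊢
      exact he
    · refine ⟨⟨a, haM⟩, by simp, ?_⟩
      rw [ωof]
      simp only [lt_self_iff_false, dif_neg, if_pos]
      · exact hτ

lemma card_canonical (n k : ℕ) (hkn : k ≤ n) :
    ((univ : Finset (Fin n)).filter fun i : Fin n => (i : ℕ) < k).card = k := by
  have : ((univ : Finset (Fin n)).filter fun i : Fin n => (i : ℕ) < k)
      = Finset.map (Fin.castLEEmb hkn) univ := by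
    ext x
    simp only [Finset.mem_filter, Finset.mem_univ, true_and, Finset.mem_map,
      Fin.castLEEmb_apply]
    constructor
    · intro hx; exact ⟨⟨(x : ℕ), hx⟩, by ext; simp⟩
    · rintro ⟨y, rfl⟩; simpa using y.2
  rw [this, Finset.card_map, Finset.card_univ, Fintype.card_fin]

section MasterFormula

variable (q : ℝ) (n M a : ℕ)

/-- The equivalence between `Fin n` and the "slot `a`" coordinates. -/
noncomputable def nowEquiv (haM : a < M) :
    Fin n ≃ {e : {e : Fin n × Fin M // ¬ ((e.2 : ℕ) < a)} // ((e.1.2 : ℕ) = a)} where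
  toFun i := ⟨⟨(i, ⟨a, haM⟩), by simp⟩, rfl⟩
  invFun e := e.1.1.1
  left_inv i := rfl
  right_inv e := by
    obtain ⟨⟨⟨i, t⟩, h1⟩, h2⟩ := e
    apply Subtype.ext; apply Subtype.ext
    exact Prod.ext rfl (Fin.ext h2.symm)

lemma measure_formula (hq0 : 0 ≤ q) (hq1 : q ≤ 1) (haM : a < M)
    (T : Set (Fin n → Fin M → Bool))
    (hT : ∀ ω ω' : Fin n → Fin M → Bool,
      (∀ (i : Fin n) (t : Fin M), (t : ℕ) < a + 1 → ω i t = ω' i t) → (ω ∈ T ↔ ω' ∈ T)) :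
    (Measure.pi fun _ : Fin n => Measure.pi fun _ : Fin M => bernMeasure q) T
      = ∑ y : PastIdx n M a → Bool, ∑ τ : Fin n → Bool,
          (if ωof n M a y τ ∈ T then (1 : ℝ≥0∞) else 0)
            * ((∏ e : PastIdx n M a, wB q (y e)) * ∏ i, wB q (τ i)) := by
  classical
  have step1 : (Measure.pi fun _ : Fin n => Measure.pi fun _ : Fin M => bernMeasure q) T
      = ∑ x : Fin n × Fin M → Bool,
          (if (fun (i : Fin n) (t : Fin M) => x (i, t)) ∈ T then (1 : ℝ≥0∞) else 0)
            * ∏ e : Fin n × Fin M, wB q (x e) := by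
    rw [measure_eq_sum, Finset.sum_filter]
    refine (Fintype.sum_equiv (Equiv.curry (Fin n) (Fin M) Bool) _ _ fun x => ?_).symm
    rw [ite_mul, one_mul, zero_mul, Fintype.prod_prod_type]
    rfl
  rw [step1]
  rw [sum_bool_split (fun e : Fin n × Fin M => (e.2 : ℕ) < a)
    (fun x => (if (fun (i : Fin n) (t : Fin M) => x (i, t)) ∈ T then (1 : ℝ≥0∞) else 0)
      * ∏ e : Fin n × Fin M, wB q (x e))]
  refine Finset.sum_congr rfl fun y _ => ?_
  have step2 : ∀ z : {e : Fin n × Fin M // ¬ ((e.2 : ℕ) < a)} → Bool,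
      (if (fun (i : Fin n) (t : Fin M) => (if h : ((i, t).2 : ℕ) < a then y ⟨(i, t), h⟩ else z ⟨(i, t), h⟩)) ∈ T
          then (1 : ℝ≥0∞) else 0)
        * ∏ e : Fin n × Fin M,
            wB q (if h : (e.2 : ℕ) < a then y ⟨e, h⟩ else z ⟨e, h⟩)
      = ((if (fun (i : Fin n) (t : Fin M) => (if h : ((i, t).2 : ℕ) < a then y ⟨(i, t), h⟩ else z ⟨(i, t), h⟩)) ∈ T
            then (1 : ℝ≥0∞) else 0) * ∏ e : PastIdx n M a, wB q (y e))
          * ∏ e : {e : Fin n × Fin M // ¬ ((e.2 : ℕ) < a)}, wB q (z e) := by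
    intro z
    rw [prod_bool_split (fun e : Fin n × Fin M => (e.2 : ℕ) < a) (fun _ b => wB q b) y z,
      ← mul_assoc]
  calc ∑ z : {e : Fin n × Fin M // ¬ ((e.2 : ℕ) < a)} → Bool,
        (if (fun e => if h : (e.2 : ℕ) < a then y ⟨e, h⟩ else z ⟨e, h⟩) ∈
            {x : Fin n × Fin M → Bool | (fun (i : Fin n) (t : Fin M) => x (i, t)) ∈ T} then (1 : ℝ≥0∞) else 0)
          * ∏ e : Fin n × Fin M, wB q (if h : (e.2 : ℕ) < a then y ⟨e, h⟩ else z ⟨e, h⟩)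
      = ∑ z : {e : Fin n × Fin M // ¬ ((e.2 : ℕ) < a)} → Bool,
        ((if (fun (i : Fin n) (t : Fin M) => (if h : ((i, t).2 : ℕ) < a then y ⟨(i, t), h⟩ else z ⟨(i, t), h⟩)) ∈ T
            then (1 : ℝ≥0∞) else 0) * ∏ e : PastIdx n M a, wB q (y e))
          * ∏ e : {e : Fin n × Fin M // ¬ ((e.2 : ℕ) < a)}, wB q (z e) :=
        Finset.sum_congr rfl fun z _ => step2 z
    _ = ∑ τ : Fin n → Bool,
          (if ωof n M a y τ ∈ T then (1 : ℝ≥0∞) else 0)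
            * ((∏ e : PastIdx n M a, wB q (y e)) * ∏ i, wB q (τ i)) := by
        rw [sum_bool_marginal (fun e : {e : Fin n × Fin M // ¬ ((e.2 : ℕ) < a)} =>
              ((e.1.2 : ℕ) = a)) (fun _ b => wB q b) (fun _ _ => wB_sum q hq0 hq1)
            (fun z => (if (fun (i : Fin n) (t : Fin M) =>
              (if h : ((i, t).2 : ℕ) < a then y ⟨(i, t), h⟩ else z ⟨(i, t), h⟩)) ∈ T
                then (1 : ℝ≥0∞) else 0) * ∏ e : PastIdx n M a, wB q (y e)) ?_]
        · refine (Fintype.sum_equiv (Equiv.arrowCongr (nowEquiv n M a haM) (Equiv.refl Bool))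
            _ _ fun τ => ?_).symm
          have h1 : (fun (i : Fin n) (t : Fin M) => (if h : ((i, t).2 : ℕ) < a then y ⟨(i, t), h⟩ else
              (if h2 : ((⟨(i, t), h⟩ : {e : Fin n × Fin M // ¬ ((e.2 : ℕ) < a)}).1.2 : ℕ) = a
                then τ ((nowEquiv n M a haM).symm ⟨⟨(i, t), h⟩, h2⟩) else false)))
              = ωof n M a y τ := by
            funext i t
            by_cases h : (t : ℕ) < a
            · simp only [ωof, dif_pos h]
            · by_cases h2 : (t : ℕ) = a
              · simp only [ωof, dif_neg h, if_pos h2, dif_pos h2]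
                rfl
              · simp only [ωof, dif_neg h, if_neg h2, dif_neg h2]
          have h2 : ∏ e : {e : {e : Fin n × Fin M // ¬ ((e.2 : ℕ) < a)} // ((e.1.2 : ℕ) = a)},
              wB q (τ ((nowEquiv n M a haM).symm e)) = ∏ i, wB q (τ i) :=
            Equiv.prod_comp (nowEquiv n M a haM).symm (fun i => wB q (τ i))
          calc (if ωof n M a y τ ∈ T then (1 : ℝ≥0∞) else 0)
                * ((∏ e : PastIdx n M a, wB q (y e)) * ∏ i, wB q (τ i))
              = ((if ωof n M a y τ ∈ T then (1 : ℝ≥0∞) else 0)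
                  * ∏ e : PastIdx n M a, wB q (y e)) * ∏ i, wB q (τ i) := by
                rw [mul_assoc]
            _ = _ := by rw [← h1, ← h2]; rfl
        · intro z z' hzz
          have hag : ∀ (i : Fin n) (t : Fin M), (t : ℕ) < a + 1 →
              (fun (i : Fin n) (t : Fin M) => (if h : ((i, t).2 : ℕ) < a then y ⟨(i, t), h⟩ else z ⟨(i, t), h⟩)) i t
                = (fun (i : Fin n) (t : Fin M) => (if h : ((i, t).2 : ℕ) < a then y ⟨(i, t), h⟩
                    else z' ⟨(i, t), h⟩)) i t := by
            intro i t ht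
            dsimp only
            by_cases h : (t : ℕ) < a
            · simp only [dif_pos h]
            · simp only [dif_neg h]
              exact hzz ⟨(i, t), h⟩ (show (t : ℕ) = a by omega)
          dsimp only
          rw [if_congr (hT _ _ hag) rfl rfl]

end MasterFormula

lemma key_factor (q : ℝ) (hq0 : 0 ≤ q) (hq1 : q ≤ 1) (n M a k j : ℕ)
    (haM : a < M) (hkn : k ≤ n)
    (B : Set (Fin n → Fin M → Bool))
    (hdet : ∀ ω ω' : Fin n → Fin M → Bool,
      (∀ (i : Fin n) (t : Fin M), (t : ℕ) < a → ω i t = ω' i t) → (ω ∈ B ↔ ω' ∈ B))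
    (hsub : ∀ ω ∈ B, connCount n M a ω = k) :
    (Measure.pi fun _ : Fin n => Measure.pi fun _ : Fin M => bernMeasure q)
        (B ∩ {ω | connCount n M (a + 1) ω = j})
      = Hfun q n j ((univ : Finset (Fin n)).filter fun i : Fin n => (i : ℕ) < k)
          * (Measure.pi fun _ : Fin n => Measure.pi fun _ : Fin M => bernMeasure q) B := by
  classical
  have hdet' : ∀ ω ω' : Fin n → Fin M → Bool,
      (∀ (i : Fin n) (t : Fin M), (t : ℕ) < a + 1 → ω i t = ω' i t) →
        (ω ∈ B ∩ {ω | connCount n M (a + 1) ω = j}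
          ↔ ω' ∈ B ∩ {ω | connCount n M (a + 1) ω = j}) := by
    intro ω ω' hag
    have h1 := hdet ω ω' (fun i t ht => hag i t (by omega))
    have h2 := connCount_congr n M (a + 1) ω ω' hag
    simp only [Set.mem_inter_iff, Set.mem_setOf_eq, h1, h2]
  have hdetB : ∀ ω ω' : Fin n → Fin M → Bool,
      (∀ (i : Fin n) (t : Fin M), (t : ℕ) < a + 1 → ω i t = ω' i t) → (ω ∈ B ↔ ω' ∈ B) :=
    fun ω ω' hag => hdet ω ω' (fun i t ht => hag i t (by omega))
  rw [measure_formula q n M a hq0 hq1 haM _ hdet', measure_formula q n M a hq0 hq1 haM B hdetB,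
    Finset.mul_sum]
  refine Finset.sum_congr rfl fun y _ => ?_
  rw [Finset.mul_sum]
  set ω0 := ωof n M a y (fun _ => false) with hω0
  have hBiff : ∀ τ, (ωof n M a y τ ∈ B) ↔ ω0 ∈ B := by
    intro τ
    apply hdet
    intro i t ht
    rw [hω0]
    simp only [ωof, dif_pos ht]
  by_cases hB : ω0 ∈ B
  · -- connected set of the past configuration
    set Cy := (univ.filter fun i : Fin n =>
      ∃ t : Fin M, (t : ℕ) < a ∧ ω0 i t = true) with hCy
    have hcardCy : Cy.card = k := hsub ω0 hB
    have hHeq : Hfun q n j Cy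
        = Hfun q n j ((univ : Finset (Fin n)).filter fun i : Fin n => (i : ℕ) < k) :=
      Hfun_card_eq q n j (by rw [hcardCy, card_canonical n k hkn])
    have hiff : ∀ τ : Fin n → Bool,
        (ωof n M a y τ ∈ B ∩ {ω | connCount n M (a + 1) ω = j})
          ↔ ((Cy ∪ univ.filter fun i => τ i = true).card = j) := by
      intro τ
      simp only [Set.mem_inter_iff, Set.mem_setOf_eq, hBiff τ, hB, show (ωof n M a y fun _ => false) ∈ B from hB, true_and,
        conn_ωof n M a haM y τ, hCy, hω0]
    have hstep : ∀ τ : Fin n → Bool,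
        (@ite ℝ≥0∞ (ωof n M a y τ ∈ B ∩ {ω | connCount n M (a + 1) ω = j})
            (Classical.propDecidable _) 1 0)
          * ((∏ e : PastIdx n M a, wB q (y e)) * ∏ i, wB q (τ i))
        = (∏ e : PastIdx n M a, wB q (y e))
            * (if (Cy ∪ univ.filter fun i => τ i = true).card = j
                then ∏ i, wB q (τ i) else 0) := by
      intro τ
      simp only [hiff τ, ite_mul, one_mul, zero_mul, mul_ite, mul_zero]
    refine (Finset.sum_congr rfl fun τ _ => hstep τ).trans ?_
    rw [← Finset.mul_sum]
    have hH : (∑ τ : Fin n → Bool, if (Cy ∪ univ.filter fun i => τ i = true).card = j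
        then ∏ i, wB q (τ i) else 0) = Hfun q n j Cy := rfl
    rw [hH, hHeq]
    have hone : ∀ τ : Fin n → Bool, (if ωof n M a y τ ∈ B then (1 : ℝ≥0∞) else 0) = 1 :=
      fun τ => if_pos ((hBiff τ).2 hB)
    refine Eq.symm ?_
    refine (Finset.sum_congr rfl fun τ _ => by rw [hone τ, one_mul]).trans ?_
    rw [← Finset.mul_sum, ← Finset.mul_sum,
      sum_prod_bool_one (fun _ b => wB q b) (fun _ => wB_sum q hq0 hq1), mul_one, mul_comm]
  · -- the past configuration is not in `B`: both sides vanish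
    rw [Finset.sum_eq_zero, Finset.sum_eq_zero]
    · intro τ _
      rw [if_neg, zero_mul, mul_zero]
      exact fun hmem => hB ((hBiff τ).1 hmem)
    · intro τ _
      rw [if_neg, zero_mul]
      exact fun hmem => hB ((hBiff τ).1 hmem.1)

/-- **Proposition 1 (Markov condition).** The process `N_1, N_2, …, N_M` counting the
connected nodes is a discrete-time Markov chain: conditioning on the whole past
`N_1 = i_1, …, N_{m-1} = i_{m-1}` gives the same conditional law for `N_m` as
conditioning on the current state `N_{m-1} = i_{m-1}` alone. -/
theorem eac_markov_condition (q : ℝ) (hq0 : 0 ≤ q) (hq1 : q ≤ 1)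
    (n M m : ℕ) (hm2 : 2 ≤ m) (hmM : m ≤ M)
    (μ : Measure (Fin n → Fin M → Bool))
    (hμ : μ = Measure.pi fun _ : Fin n => Measure.pi fun _ : Fin M => bernMeasure q)
    (iSeq : ℕ → ℕ) (j : ℕ)
    (hmono : ∀ r s : ℕ, 1 ≤ r → r ≤ s → s ≤ m - 1 → iSeq r ≤ iSeq s)
    (hlast : iSeq (m - 1) ≤ j) (hjn : j ≤ n)
    (hpos : 0 < μ {ω | ∀ r : ℕ, 1 ≤ r → r ≤ m - 1 → connCount n M r ω = iSeq r}) :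
    μ[{ω | connCount n M m ω = j} |
        {ω | ∀ r : ℕ, 1 ≤ r → r ≤ m - 1 → connCount n M r ω = iSeq r}] =
    μ[{ω | connCount n M m ω = j} | {ω | connCount n M (m - 1) ω = iSeq (m - 1)}] := by
  classical
  subst hμ
  obtain ⟨a, rfl⟩ : ∃ a, m = a + 1 := ⟨m - 1, by omega⟩
  have ha1 : 1 ≤ a := by omega
  have haM : a < M := by omega
  simp only [Nat.add_sub_cancel] at hlast hpos ⊢
  set μ := (Measure.pi fun _ : Fin n => Measure.pi fun _ : Fin M => bernMeasure q) with hμdef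
  have hdet1 : ∀ ω ω' : Fin n → Fin M → Bool,
      (∀ (i : Fin n) (t : Fin M), (t : ℕ) < a → ω i t = ω' i t) →
      (ω ∈ {ω | ∀ r : ℕ, 1 ≤ r → r ≤ a → connCount n M r ω = iSeq r}
        ↔ ω' ∈ {ω | ∀ r : ℕ, 1 ≤ r → r ≤ a → connCount n M r ω = iSeq r}) := by
    intro ω ω' hag
    have hc : ∀ r, r ≤ a → connCount n M r ω = connCount n M r ω' :=
      fun r hr => connCount_congr n M r ω ω' (fun i t ht => hag i t (lt_of_lt_of_le ht hr))
    constructor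
    · intro h r h1 h2; rw [← hc r h2]; exact h r h1 h2
    · intro h r h1 h2; rw [hc r h2]; exact h r h1 h2
  have hdet2 : ∀ ω ω' : Fin n → Fin M → Bool,
      (∀ (i : Fin n) (t : Fin M), (t : ℕ) < a → ω i t = ω' i t) →
      (ω ∈ {ω | connCount n M a ω = iSeq a} ↔ ω' ∈ {ω | connCount n M a ω = iSeq a}) := by
    intro ω ω' hag
    have hc := connCount_congr n M a ω ω' hag
    simp only [Set.mem_setOf_eq, hc]
  have hsub1 : ∀ ω ∈ {ω : Fin n → Fin M → Bool | ∀ r : ℕ, 1 ≤ r → r ≤ a →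
      connCount n M r ω = iSeq r}, connCount n M a ω = iSeq a :=
    fun ω h => h a ha1 le_rfl
  have hsub2 : ∀ ω ∈ {ω : Fin n → Fin M → Bool | connCount n M a ω = iSeq a},
      connCount n M a ω = iSeq a := fun ω h => h
  have hB12 : {ω : Fin n → Fin M → Bool | ∀ r : ℕ, 1 ≤ r → r ≤ a → connCount n M r ω = iSeq r}
      ⊆ {ω | connCount n M a ω = iSeq a} := fun ω h => h a ha1 le_rfl
  have hkn : iSeq a ≤ n := le_trans hlast hjn
  have hk1 := key_factor q hq0 hq1 n M a (iSeq a) j haM hkn _ hdet1 hsub1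
  have hk2 := key_factor q hq0 hq1 n M a (iSeq a) j haM hkn _ hdet2 hsub2
  haveI : IsProbabilityMeasure (bernMeasure q) := bern_prob q hq0 hq1
  haveI : IsProbabilityMeasure μ := by rw [hμdef]; infer_instance
  have h1ne : μ {ω | ∀ r : ℕ, 1 ≤ r → r ≤ a → connCount n M r ω = iSeq r} ≠ 0 :=
    ne_of_gt hpos
  have h2ne : μ {ω | connCount n M a ω = iSeq a} ≠ 0 := by
    intro h
    exact h1ne (le_antisymm (le_trans (measure_mono hB12) h.le) zero_le)
  rw [cond_apply MeasurableSet.of_discrete, cond_apply MeasurableSet.of_discrete, hk1, hk2]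
  have hcancel : ∀ (x : ℝ≥0∞), x ≠ 0 → x ≠ ⊤ → ∀ c : ℝ≥0∞, x⁻¹ * (c * x) = c := by
    intro x hx ht c
    rw [mul_comm c x, ← mul_assoc, ENNReal.inv_mul_cancel hx ht, one_mul]
  rw [hcancel _ h1ne (measure_ne_top μ _), hcancel _ h2ne (measure_ne_top μ _)]
end

section
/- Let n ≥ 2 and i, j : Fin n with i ≠ j, and set T = Finset.univ \ {i, j}. Define GHZ : (Fin n → Bool) → ℂ by GHZ b = 1/√2 if b is constant (all-false or all-true) and 0 otherwise, and define the partial Hadamard transform on T by (H_T v) b = 2^{-(n−2)/2} · ∑_{b'} (if (∀ h ∉ T, b' h = b h) then (∏_{h ∈ T} (if b h ∧ b' h then (−1 : ℂ) else 1)) · v b' else 0). Then for every b : Fin n → Bool: (H_T GHZ) b = 0 if b i ≠ b j; (H_T GHZ) b = (1/√2) · 2^{-(n−2)/2} if b i = b j = false; and (H_T GHZ) b = (1/√2) · 2^{-(n−2)/2} · (−1)^(card {h ∈ T | b h = true}) if b i = b j = true. -/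
/-- The amplitude function of the `n`-qubit GHZ state: amplitude `1/√2` on the all-false
and all-true strings, `0` elsewhere. -/
noncomputable def GHZ (n : ℕ) : (Fin n → Bool) → ℂ := fun b =>
  if (∀ i, b i = false) ∨ (∀ i, b i = true) then 1 / (Real.sqrt 2 : ℂ) else 0

/-- Applying the Hadamard gate to every qubit in `T ⊆ Fin n` (and the identity elsewhere)
to the state with amplitude function `v`:
`(H_T v) b = 2^{-(card T)/2} ∑_{b'} [∀ h ∉ T, b' h = b h] ·
(−1)^{card {h ∈ T | b h ∧ b' h}} · v b'`. -/
noncomputable def hadamardOn (n : ℕ) (T : Finset (Fin n)) (v : (Fin n → Bool) → ℂ) :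
    (Fin n → Bool) → ℂ := fun b =>
  (1 / (Real.sqrt 2 : ℂ)) ^ T.card *
    ∑ b' : Fin n → Bool,
      if ∀ h ∉ T, b' h = b h then
        (∏ h ∈ T, if b h = true ∧ b' h = true then (-1 : ℂ) else 1) * v b'
      else 0

/-- **Equation (14).** Applying Hadamard gates to all qubits of an `n`-qubit GHZ state
except qubits `i ≠ j` (i.e. to `T = univ \ {i, j}`) yields a state whose amplitude at `b`
vanishes when `b i ≠ b j`, equals `(1/√2) · 2^{-(n-2)/2}` when `b i = b j = false`, and
equals `(1/√2) · 2^{-(n-2)/2} · (−1)^{card {h ∈ T | b h = true}}` when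
`b i = b j = true`: nodes `i` and `j` share a Bell pair `|Φ⁺⟩`/`|Φ⁻⟩` whose sign is the
parity of the other nodes' Hadamard-basis measurement outcomes. -/
theorem ghz_hadamard_bell_extraction (n : ℕ) (hn : 2 ≤ n) (i j : Fin n) (hij : i ≠ j)
    (T : Finset (Fin n)) (hT : T = Finset.univ \ {i, j}) (b : Fin n → Bool) :
    (b i ≠ b j → hadamardOn n T (GHZ n) b = 0) ∧
    (b i = false → b j = false →
      hadamardOn n T (GHZ n) b =
        (1 / (Real.sqrt 2 : ℂ)) * (1 / (Real.sqrt 2 : ℂ)) ^ (n - 2)) ∧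
    (b i = true → b j = true →
      hadamardOn n T (GHZ n) b =
        (1 / (Real.sqrt 2 : ℂ)) * (1 / (Real.sqrt 2 : ℂ)) ^ (n - 2) *
          (-1 : ℂ) ^ (T.filter fun h => b h = true).card) := by
  subst hT
  set T := Finset.univ \ ({i, j} : Finset (Fin n)) with hT
  have hnotT : ∀ h : Fin n, h ∉ T ↔ h = i ∨ h = j := by
    intro h; simp only [hT, Finset.mem_sdiff, Finset.mem_univ, true_and,
      Finset.mem_insert, Finset.mem_singleton, not_not]
  have hcard : T.card = n - 2 := by
    rw [hT, Finset.card_sdiff_of_subset (Finset.subset_univ _), Finset.card_pair hij,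
      Finset.card_univ, Fintype.card_fin]
  set f : (Fin n → Bool) → ℂ := fun b' =>
    if ∀ h ∉ T, b' h = b h then
      (∏ h ∈ T, if b h = true ∧ b' h = true then (-1 : ℂ) else 1) * GHZ n b'
    else 0 with hf
  have hH : hadamardOn n T (GHZ n) b
      = (1 / (Real.sqrt 2 : ℂ)) ^ T.card * ∑ b' : Fin n → Bool, f b' := rfl
  have hzero : ∀ b' : Fin n → Bool, b' ≠ (fun _ => false) → b' ≠ (fun _ => true) →
      f b' = 0 := by
    intro b' h0 h1
    have hg : GHZ n b' = 0 := by
      rw [GHZ, if_neg]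
      rintro (h | h)
      · exact h0 (funext h)
      · exact h1 (funext h)
    simp [hf, hg]
  have hne : (fun _ : Fin n => false) ≠ (fun _ => true) := by
    intro h
    exact Bool.noConfusion (congrFun h i)
  have hsum : ∑ b' : Fin n → Bool, f b'
      = f (fun _ => false) + f (fun _ => true) := by
    refine Finset.sum_eq_add_of_mem _ _ (Finset.mem_univ _) (Finset.mem_univ _) hne ?_
    intro k _ hk
    exact hzero k hk.1 hk.2
  have hg0 : GHZ n (fun _ : Fin n => false) = 1 / (Real.sqrt 2 : ℂ) := by
    rw [GHZ, if_pos (Or.inl fun _ => rfl)]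
  have hg1 : GHZ n (fun _ : Fin n => true) = 1 / (Real.sqrt 2 : ℂ) := by
    rw [GHZ, if_pos (Or.inr fun _ => rfl)]
  have hffalse : f (fun _ => false)
      = if b i = false ∧ b j = false then 1 / (Real.sqrt 2 : ℂ) else 0 := by
    have hcond : (∀ h ∉ T, (fun _ : Fin n => false) h = b h)
        ↔ (b i = false ∧ b j = false) := by
      constructor
      · intro h
        exact ⟨(h i ((hnotT i).2 (Or.inl rfl))).symm,
               (h j ((hnotT j).2 (Or.inr rfl))).symm⟩
      · rintro ⟨hi', hj'⟩ h hh
        rcases (hnotT h).1 hh with rfl | rfl <;> simp [hi', hj']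
    by_cases hc : b i = false ∧ b j = false
    · rw [hf]
      simp only [if_pos (hcond.2 hc), if_pos hc]
      simp [hg0]
    · rw [hf]
      simp only [if_neg (fun h => hc (hcond.1 h)), if_neg hc]
  have hftrue : f (fun _ => true)
      = if b i = true ∧ b j = true then
          (-1 : ℂ) ^ (T.filter fun h => b h = true).card * (1 / (Real.sqrt 2 : ℂ))
        else 0 := by
    have hcond : (∀ h ∉ T, (fun _ : Fin n => true) h = b h)
        ↔ (b i = true ∧ b j = true) := by
      constructor
      · intro h
        exact ⟨(h i ((hnotT i).2 (Or.inl rfl))).symm,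
               (h j ((hnotT j).2 (Or.inr rfl))).symm⟩
      · rintro ⟨hi', hj'⟩ h hh
        rcases (hnotT h).1 hh with rfl | rfl <;> simp [hi', hj']
    have hprod : (∏ h ∈ T, if b h = true ∧ (fun _ : Fin n => true) h = true
          then (-1 : ℂ) else 1)
        = (-1 : ℂ) ^ (T.filter fun h => b h = true).card := by
      simp only [and_true]
      rw [Finset.prod_ite, Finset.prod_const, Finset.prod_const, one_pow, mul_one]
    by_cases hc : b i = true ∧ b j = true
    · rw [hf]
      beta_reduce
      rw [if_pos (hcond.2 hc), if_pos hc, hprod, hg1]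
    · rw [hf]
      simp only [if_neg (fun h => hc (hcond.1 h)), if_neg hc]
  refine ⟨?_, ?_, ?_⟩
  · intro hbij
    have h1 : ¬ (b i = false ∧ b j = false) := by
      rintro ⟨h1, h2⟩; exact hbij (h1.trans h2.symm)
    have h2 : ¬ (b i = true ∧ b j = true) := by
      rintro ⟨h1, h2⟩; exact hbij (h1.trans h2.symm)
    rw [hH, hsum, hffalse, hftrue, if_neg h1, if_neg h2]
    ring
  · intro hbi hbj
    have h2 : ¬ (b i = true ∧ b j = true) := by
      rintro ⟨h1, _⟩; rw [hbi] at h1; exact Bool.noConfusion h1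
    rw [hH, hsum, hffalse, hftrue, if_pos ⟨hbi, hbj⟩, if_neg h2, hcard]
    ring
  · intro hbi hbj
    have h1 : ¬ (b i = false ∧ b j = false) := by
      rintro ⟨h1, _⟩; rw [hbi] at h1; exact Bool.noConfusion h1
    rw [hH, hsum, hffalse, hftrue, if_neg h1, if_pos ⟨hbi, hbj⟩, hcard]
    ring
end
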